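/- Let b₀, b₁ > 0. Then the expectation of the statistical parity gap of Algorithm 2's classifier over the independent Laplace noises satisfies ∫ G(l₀,l₁) d(Lap(b₀) ⊗ Lap(b₁)) ≤ b₀ + b₁. (Fairness guarantee of Proposition 2: E[Δ_SP] ≤ 1/(n₀ε₂) + 1/(n₁ε₃) with b₀ = 1/(n₀ε₂) and b₁ = 1/(n₁ε₃).) -/

import Mathlib

open MeasureTheory

/-- The Laplace distribution on `ℝ` with scale `b`. -/
noncomputable def Lap (b : ℝ) : Measure ℝ :=
  volume.withDensity fun x => ENNReal.ofReal ((2 * b)⁻¹ * Real.exp (-|x| / b))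

/-- Projection onto `[0,1]`. -/
noncomputable def clip (x : ℝ) : ℝ := min (max x 0) 1

/-- The statistical parity gap of Algorithm 2's classifier as a function of the Laplace
noise realizations `(l₀, l₁)`, with clipped perturbed rates `α̃ = [α+l₀]₀¹`,
`β̃ = [β+l₁]₀¹` (division by zero yields `0`, as in Lean's convention). -/
noncomputable def G (α β l₀ l₁ : ℝ) : ℝ :=
  let αt := clip (α + l₀)
  let βt := clip (β + l₁)
  if βt ≤ αt then
    |α * (αt + βt) / (2 * αt) - β - (1 - β) * (αt - βt) / (2 * (1 - βt))|
  else
    |β * (αt + βt) / (2 * βt) - α - (1 - α) * (βt - αt) / (2 * (1 - αt))|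

open Real Set

/-! In the branch `β̃ ≤ α̃`, put `p = (α̃ + β̃)/(2α̃)` and `q = (α̃ - β̃)/(2(1 - β̃))`, both in
`[0, 1]`. The gap inside the absolute value equals `p (α - α̃) + (1 - q)(β̃ - β)`, so it is at most
`|α̃ - α| + |β̃ - β| ≤ |l₀| + |l₁|`, because clipping to `[0, 1]` is `1`-Lipschitz and fixes `α`
and `β`; the other branch is symmetric. It remains to integrate: `E|l| = b` under `Lap b`. -/

lemma clip_of_mem_Icc {a : ℝ} (ha : a ∈ Icc (0 : ℝ) 1) : clip a = a := by
  simp only [clip, max_eq_left ha.1, min_eq_left ha.2]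

lemma clip_mem_Icc (x : ℝ) : clip x ∈ Icc (0 : ℝ) 1 :=
  ⟨le_min (le_max_right _ _) zero_le_one, min_le_right _ _⟩

lemma abs_clip_sub_clip_le (x y : ℝ) : |clip x - clip y| ≤ |x - y| :=
  calc |clip x - clip y| ≤ max |max x 0 - max y 0| |(1 : ℝ) - 1| := abs_min_sub_min_le_max _ _ _ _
    _ ≤ |x - y| := max_le (abs_max_sub_max_le_abs _ _ _) (by simp)

lemma abs_clip_add_sub_le {a : ℝ} (ha : a ∈ Icc (0 : ℝ) 1) (l : ℝ) : |clip (a + l) - a| ≤ |l| := by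
  simpa [clip_of_mem_Icc ha] using abs_clip_sub_clip_le (a + l) a

lemma abs_parity_gap_le {α β u v : ℝ} (hv : 0 ≤ v) (hvu : v ≤ u) (hu : u ≤ 1) :
    |α * (u + v) / (2 * u) - β - (1 - β) * (u - v) / (2 * (1 - v))| ≤ |u - α| + |v - β| := by
  set p := (u + v) / (2 * u)
  set q := (u - v) / (2 * (1 - v))
  have hp : p ∈ Icc (0 : ℝ) 1 :=
    ⟨div_nonneg (by linarith) (by linarith), div_le_one_of_le₀ (by linarith) (by linarith)⟩
  have hq : q ∈ Icc (0 : ℝ) 1 :=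
    ⟨div_nonneg (by linarith) (by linarith), div_le_one_of_le₀ (by linarith) (by linarith)⟩
  -- With the convention `x / 0 = 0` these also hold at `u = v = 0` and `u = v = 1`.
  have hpu : p * u = (u + v) / 2 := by
    rcases eq_or_lt_of_le (hv.trans hvu) with hu0 | hu0
    · simp [p, ← hu0, le_antisymm (hu0 ▸ hvu) hv]
    · simp only [p]; field_simp
  have hqv : q * (1 - v) = (u - v) / 2 := by
    rcases eq_or_lt_of_le (hvu.trans hu) with hv1 | hv1
    · simp [q, hv1, le_antisymm hu (hv1 ▸ hvu)]
    · have : 1 - v ≠ 0 := (sub_pos.2 hv1).ne'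
      simp only [q]; field_simp
  have hsplit : α * (u + v) / (2 * u) - β - (1 - β) * (u - v) / (2 * (1 - v)) =
      p * (α - u) + (1 - q) * (v - β) := by
    simp only [p, q] at hpu hqv ⊢
    linear_combination hpu - hqv
  calc |α * (u + v) / (2 * u) - β - (1 - β) * (u - v) / (2 * (1 - v))|
      ≤ p * |α - u| + (1 - q) * |v - β| := by
        rw [hsplit]
        refine (abs_add_le _ _).trans_eq ?_
        rw [abs_mul, abs_mul, abs_of_nonneg hp.1, abs_of_nonneg (sub_nonneg.2 hq.2)]
    _ ≤ |u - α| + |v - β| := by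
        rw [abs_sub_comm α u]
        gcongr
        · exact mul_le_of_le_one_left (abs_nonneg _) hp.2
        · exact mul_le_of_le_one_left (abs_nonneg _) (by linarith [hq.1])

lemma G_nonneg (α β l₀ l₁ : ℝ) : 0 ≤ G α β l₀ l₁ := by
  simp only [G]
  split_ifs <;> exact abs_nonneg _

lemma G_le_abs_add_abs {α β : ℝ} (hα : α ∈ Icc (0 : ℝ) 1) (hβ : β ∈ Icc (0 : ℝ) 1) (l₀ l₁ : ℝ) :
    G α β l₀ l₁ ≤ |l₀| + |l₁| := by
  have h₀ := abs_clip_add_sub_le hα l₀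
  have h₁ := abs_clip_add_sub_le hβ l₁
  obtain ⟨hα₀, hα₁⟩ := clip_mem_Icc (α + l₀)
  obtain ⟨hβ₀, hβ₁⟩ := clip_mem_Icc (β + l₁)
  simp only [G]
  split_ifs with h
  · linarith [abs_parity_gap_le (α := α) (β := β) hβ₀ h hα₁]
  · have := abs_parity_gap_le (α := β) (β := α) hα₀ (not_le.1 h).le hβ₁
    rw [add_comm (clip (β + l₁))] at this
    linarith

section Laplace

open scoped Nat

variable {b : ℝ}

noncomputable def laplacePDFReal (b x : ℝ) : ℝ := (2 * b)⁻¹ * exp (-|x| / b)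

lemma Lap_eq_withDensity (b : ℝ) :
    Lap b = volume.withDensity fun x => ENNReal.ofReal (laplacePDFReal b x) := rfl

lemma laplacePDFReal_nonneg (hb : 0 < b) (x : ℝ) : 0 ≤ laplacePDFReal b x := by
  unfold laplacePDFReal; positivity

lemma measurable_laplacePDFReal (b : ℝ) : Measurable (laplacePDFReal b) := by
  unfold laplacePDFReal; fun_prop

lemma integral_pow_mul_exp_neg_div_Ioi (hb : 0 < b) (n : ℕ) :
    ∫ x in Ioi (0 : ℝ), x ^ n * exp (-x / b) = n ! * b ^ (n + 1) := by
  have h := integral_rpow_mul_exp_neg_mul_Ioi (a := n + 1) (by positivity) (inv_pos.2 hb)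
  rw [Gamma_nat_eq_factorial, one_div, inv_inv, add_sub_cancel_right] at h
  norm_cast at h
  rw [mul_comm, ← h]
  refine setIntegral_congr_fun measurableSet_Ioi fun x _ => ?_
  simp [div_eq_inv_mul]

lemma integral_laplacePDFReal_mul_abs_pow (hb : 0 < b) (n : ℕ) :
    ∫ x, laplacePDFReal b x * |x| ^ n = n ! * b ^ n :=
  calc ∫ x, laplacePDFReal b x * |x| ^ n
      = ∫ x, (fun t => (2 * b)⁻¹ * (t ^ n * exp (-t / b))) |x| := by
        simp only [laplacePDFReal, mul_assoc, mul_comm (exp _)]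
    _ = 2 * ∫ x in Ioi 0, (2 * b)⁻¹ * (x ^ n * exp (-x / b)) :=
        integral_comp_abs (f := fun t => (2 * b)⁻¹ * (t ^ n * exp (-t / b)))
    _ = 2 * ((2 * b)⁻¹ * (n ! * b ^ (n + 1))) := by
        rw [integral_const_mul, integral_pow_mul_exp_neg_div_Ioi hb]
    _ = n ! * b ^ n := by
        field_simp
        ring

lemma integral_Lap (hb : 0 < b) (g : ℝ → ℝ) :
    ∫ x, g x ∂Lap b = ∫ x, laplacePDFReal b x * g x := by
  rw [Lap_eq_withDensity, integral_withDensity_eq_integral_toReal_smul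
    (measurable_laplacePDFReal b).ennreal_ofReal (ae_of_all _ fun _ => ENNReal.ofReal_lt_top)]
  simp [ENNReal.toReal_ofReal (laplacePDFReal_nonneg hb _)]

lemma isProbabilityMeasure_Lap (hb : 0 < b) : IsProbabilityMeasure (Lap b) := by
  have h := integral_Lap hb fun _ => 1
  have h₁ := integral_laplacePDFReal_mul_abs_pow hb 0
  simp only [integral_const, smul_eq_mul, mul_one, pow_zero, Nat.factorial_zero,
    Nat.cast_one] at h h₁
  exact ⟨ENNReal.toReal_eq_one_iff _ |>.1 (h.trans h₁)⟩

lemma integral_abs_Lap (hb : 0 < b) : ∫ x, |x| ∂Lap b = b := by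
  simpa [integral_Lap hb] using integral_laplacePDFReal_mul_abs_pow hb 1

-- A nonzero Bochner integral certifies integrability.
lemma integrable_abs_Lap (hb : 0 < b) : Integrable (fun x => |x|) (Lap b) :=
  .of_integral_ne_zero (by rw [integral_abs_Lap hb]; exact hb.ne')

end Laplace

lemma integral_prod_le_integral_add_integral {X Y : Type*} [MeasurableSpace X] [MeasurableSpace Y]
    {μ : Measure X} {ν : Measure Y} [IsProbabilityMeasure μ] [IsProbabilityMeasure ν]
    {F : X × Y → ℝ} {f : X → ℝ} {g : Y → ℝ} (hf : Integrable f μ) (hg : Integrable g ν)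
    (hF₀ : ∀ p, 0 ≤ F p) (hF : ∀ p, F p ≤ f p.1 + g p.2) :
    ∫ p, F p ∂μ.prod ν ≤ ∫ x, f x ∂μ + ∫ y, g y ∂ν := by
  have hf' := hf.comp_fst ν
  have hg' := hg.comp_snd μ
  calc ∫ p, F p ∂μ.prod ν ≤ ∫ p, f p.1 + g p.2 ∂μ.prod ν :=
        integral_mono_of_nonneg (ae_of_all _ hF₀) (hf'.add hg') (ae_of_all _ hF)
    _ = ∫ x, f x ∂μ + ∫ y, g y ∂ν := by
        rw [integral_add hf' hg', integral_fun_fst, integral_fun_snd]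
        simp

/-- **Proposition 2 (fairness guarantee).** The expected statistical parity gap of
Algorithm 2's classifier over the independent Laplace noises is at most `b₀ + b₁`. -/
theorem algorithm2_fairness_expectation
    (b₀ b₁ : ℝ) (hb₀ : 0 < b₀) (hb₁ : 0 < b₁)
    (α β : ℝ) (hα : α ∈ Set.Icc (0:ℝ) 1) (hβ : β ∈ Set.Icc (0:ℝ) 1) :
    ∫ p : ℝ × ℝ, G α β p.1 p.2 ∂((Lap b₀).prod (Lap b₁)) ≤ b₀ + b₁ := by
  have := isProbabilityMeasure_Lap hb₀
  have := isProbabilityMeasure_Lap hb₁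
  calc ∫ p : ℝ × ℝ, G α β p.1 p.2 ∂((Lap b₀).prod (Lap b₁))
      ≤ ∫ x, |x| ∂Lap b₀ + ∫ y, |y| ∂Lap b₁ :=
        integral_prod_le_integral_add_integral (integrable_abs_Lap hb₀) (integrable_abs_Lap hb₁)
          (fun p => G_nonneg α β p.1 p.2) (fun p => G_le_abs_add_abs hα hβ p.1 p.2)
    _ = b₀ + b₁ := by rw [integral_abs_Lap hb₀, integral_abs_Lap hb₁]
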